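/- arXiv:2208.00126 — 11 statements merged into one kernel-verified Lean document; each statement's English description precedes it below -/
import Mathlib

section
/- Let (X, d) be a metric space, θ ∈ (0, 1], c ≥ 0, and let φ : X → ℝ be θ-Hölder with constant c. Let K ≥ 0, ρ₁, ρ₂, ρ₃ ∈ [0, 1), j ∈ ℕ, and let a, x, z, y, b : ℕ → X be sequences such that for every i with 0 ≤ i ≤ j: d(a_i, x_i) ≤ K·ρ₁^{j−i}, d(x_i, z_i) ≤ K·ρ₂^{i}, d(z_i, y_i) ≤ K·ρ₃^{j−i}, and d(y_i, b_i) ≤ K·ρ₁^{j−i}. Then |∑_{i=0}^{j−1} (φ(a_i) − φ(b_i))| ≤ c·K^θ·( 2/(1 − ρ₁^θ) + 1/(1 − ρ₂^θ) + 1/(1 − ρ₃^θ) ); in particular the bound does not depend on j. -/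
open Finset

private lemma geo_sum_le (r : ℝ) (h0 : 0 ≤ r) (h1 : r < 1) (j : ℕ) :
    ∑ i ∈ Finset.range j, r ^ i ≤ 1 / (1 - r) := by
  have h1' : 0 < 1 - r := by linarith
  rw [geom_sum_eq (by linarith : r ≠ 1)]
  have he : (r ^ j - 1) / (r - 1) = (1 - r ^ j) / (1 - r) := by
    rw [← neg_div_neg_eq]; ring_nf
  rw [he]
  have : 0 ≤ r ^ j := pow_nonneg h0 j
  rw [div_le_div_iff₀ h1' h1']
  nlinarith


private lemma geo_sum_rev_le (r : ℝ) (h0 : 0 ≤ r) (h1 : r < 1) (j : ℕ) :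
    ∑ i ∈ Finset.range j, r ^ (j - i) ≤ 1 / (1 - r) := by
  rw [← Finset.sum_range_reflect]
  calc ∑ i ∈ Finset.range j, r ^ (j - (j - 1 - i))
      ≤ ∑ i ∈ Finset.range j, r ^ i := by
        apply Finset.sum_le_sum
        intro i hi
        rw [Finset.mem_range] at hi
        have : j - (j - 1 - i) = i + 1 := by omega
        rw [this, pow_succ]
        nlinarith [pow_nonneg h0 i, pow_le_one₀ h0 h1.le (n := i)]
    _ ≤ 1 / (1 - r) := geo_sum_le r h0 h1 j

private lemma pow_rpow_comm (x : ℝ) (hx : 0 ≤ x) (n : ℕ) (θ : ℝ) :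
    (x ^ n) ^ θ = (x ^ θ) ^ n := by
  rw [← Real.rpow_natCast x n, ← Real.rpow_mul hx, mul_comm, Real.rpow_mul hx,
    Real.rpow_natCast]

/-- Distortion control for matched unstable dynamical balls: four comparison chains
`a↔x`, `x↔z`, `z↔y`, `y↔b` contracting at rates `ρ₁` (backward), `ρ₂` (forward),
`ρ₃` (backward), `ρ₁` give a bound on Birkhoff-sum differences independent of `j`. -/
theorem stmt1 {X : Type*} [MetricSpace X] (θ c K ρ₁ ρ₂ ρ₃ : ℝ)
    (hθ0 : 0 < θ) (hθ1 : θ ≤ 1) (hc : 0 ≤ c) (hK : 0 ≤ K)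
    (hρ₁ : ρ₁ ∈ Set.Ico (0:ℝ) 1) (hρ₂ : ρ₂ ∈ Set.Ico (0:ℝ) 1) (hρ₃ : ρ₃ ∈ Set.Ico (0:ℝ) 1)
    (φ : X → ℝ) (hφ : ∀ a b : X, |φ a - φ b| ≤ c * dist a b ^ θ)
    (j : ℕ) (a x z y b : ℕ → X)
    (hax : ∀ i : ℕ, i ≤ j → dist (a i) (x i) ≤ K * ρ₁ ^ (j - i))
    (hxz : ∀ i : ℕ, i ≤ j → dist (x i) (z i) ≤ K * ρ₂ ^ i)
    (hzy : ∀ i : ℕ, i ≤ j → dist (z i) (y i) ≤ K * ρ₃ ^ (j - i))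
    (hyb : ∀ i : ℕ, i ≤ j → dist (y i) (b i) ≤ K * ρ₁ ^ (j - i)) :
    |∑ i ∈ Finset.range j, (φ (a i) - φ (b i))| ≤
      c * K ^ θ * (2 / (1 - ρ₁ ^ θ) + 1 / (1 - ρ₂ ^ θ) + 1 / (1 - ρ₃ ^ θ)) := by
  obtain ⟨hρ₁0, hρ₁1⟩ := hρ₁
  obtain ⟨hρ₂0, hρ₂1⟩ := hρ₂
  obtain ⟨hρ₃0, hρ₃1⟩ := hρ₃
  have hKθ : 0 ≤ K ^ θ := Real.rpow_nonneg hK θ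
  -- pair bound
  have pair : ∀ (ρ : ℝ), 0 ≤ ρ → ∀ (m : ℕ) (p q : X), dist p q ≤ K * ρ ^ m →
      |φ p - φ q| ≤ c * K ^ θ * (ρ ^ θ) ^ m := by
    intro ρ hρ m p q hd
    have h1 : dist p q ^ θ ≤ (K * ρ ^ m) ^ θ :=
      Real.rpow_le_rpow dist_nonneg hd hθ0.le
    have h2 : (K * ρ ^ m) ^ θ = K ^ θ * (ρ ^ θ) ^ m := by
      rw [Real.mul_rpow hK (pow_nonneg hρ m), pow_rpow_comm ρ hρ m θ]
    calc |φ p - φ q| ≤ c * dist p q ^ θ := hφ p q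
      _ ≤ c * (K * ρ ^ m) ^ θ := by nlinarith
      _ = c * K ^ θ * (ρ ^ θ) ^ m := by rw [h2]; ring
  have key : ∀ i ∈ Finset.range j, |φ (a i) - φ (b i)| ≤
      c * K ^ θ * (2 * (ρ₁ ^ θ) ^ (j - i) + (ρ₂ ^ θ) ^ i + (ρ₃ ^ θ) ^ (j - i)) := by
    intro i hi
    rw [Finset.mem_range] at hi
    have hij : i ≤ j := hi.le
    have t : |φ (a i) - φ (b i)| ≤ |φ (a i) - φ (x i)| + |φ (x i) - φ (z i)| +
        |φ (z i) - φ (y i)| + |φ (y i) - φ (b i)| := by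
      have := abs_sub_le (φ (a i)) (φ (x i)) (φ (b i))
      have := abs_sub_le (φ (x i)) (φ (z i)) (φ (b i))
      have := abs_sub_le (φ (z i)) (φ (y i)) (φ (b i))
      linarith
    have h1 := pair ρ₁ hρ₁0 (j - i) _ _ (hax i hij)
    have h2 := pair ρ₂ hρ₂0 i _ _ (hxz i hij)
    have h3 := pair ρ₃ hρ₃0 (j - i) _ _ (hzy i hij)
    have h4 := pair ρ₁ hρ₁0 (j - i) _ _ (hyb i hij)
    linarith
  have hr1 : ρ₁ ^ θ < 1 := Real.rpow_lt_one hρ₁0 hρ₁1 hθ0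
  have hr2 : ρ₂ ^ θ < 1 := Real.rpow_lt_one hρ₂0 hρ₂1 hθ0
  have hr3 : ρ₃ ^ θ < 1 := Real.rpow_lt_one hρ₃0 hρ₃1 hθ0
  have hr10 : 0 ≤ ρ₁ ^ θ := Real.rpow_nonneg hρ₁0 θ
  have hr20 : 0 ≤ ρ₂ ^ θ := Real.rpow_nonneg hρ₂0 θ
  have hr30 : 0 ≤ ρ₃ ^ θ := Real.rpow_nonneg hρ₃0 θ
  calc |∑ i ∈ Finset.range j, (φ (a i) - φ (b i))|
      ≤ ∑ i ∈ Finset.range j, |φ (a i) - φ (b i)| := Finset.abs_sum_le_sum_abs _ _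
    _ ≤ ∑ i ∈ Finset.range j,
        c * K ^ θ * (2 * (ρ₁ ^ θ) ^ (j - i) + (ρ₂ ^ θ) ^ i + (ρ₃ ^ θ) ^ (j - i)) :=
        Finset.sum_le_sum key
    _ = c * K ^ θ * (2 * ∑ i ∈ Finset.range j, (ρ₁ ^ θ) ^ (j - i)
          + ∑ i ∈ Finset.range j, (ρ₂ ^ θ) ^ i
          + ∑ i ∈ Finset.range j, (ρ₃ ^ θ) ^ (j - i)) := by
        rw [← Finset.mul_sum, Finset.sum_add_distrib, Finset.sum_add_distrib,
          Finset.mul_sum]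
    _ ≤ c * K ^ θ * (2 * (1 / (1 - ρ₁ ^ θ)) + 1 / (1 - ρ₂ ^ θ) + 1 / (1 - ρ₃ ^ θ)) := by
        have g1 := geo_sum_rev_le _ hr10 hr1 j
        have g2 := geo_sum_le _ hr20 hr2 j
        have g3 := geo_sum_rev_le _ hr30 hr3 j
        have : 0 ≤ c * K ^ θ := mul_nonneg hc hKθ
        nlinarith
    _ = c * K ^ θ * (2 / (1 - ρ₁ ^ θ) + 1 / (1 - ρ₂ ^ θ) + 1 / (1 - ρ₃ ^ θ)) := by ring
end

section
/- Let X be a standard Borel space, μ a Borel probability measure on X, and f : X → X a bijection such that f and f⁻¹ are measurable and f preserves μ. Let m be a sub-σ-algebra of the Borel σ-algebra of X, and for a sub-σ-algebra m′ let κ^{m′} : X → Measure(X) denote the regular conditional distribution of μ given m′ (a μ-a.e. unique m′-measurable kernel κ^{m′} such that for every bounded measurable g, x ↦ ∫ g dκ^{m′}(x) is a version of the conditional expectation of g given m′). Then for every n ∈ ℕ, for μ-almost every x ∈ X, κ^{m_n}(x) = (f^n)_* ( κ^{m}(f^{−n}(x)) ), where m_n = {S ⊆ X measurable : (f^n)^{-1}(S)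 ∈ m} is the image σ-algebra of m under f^n. -/
/-!
Transporting a regular conditional distribution `κ` of `μ` given `m` along the measure-preserving
bijection `e = f^[n]` gives the family `y ↦ e_* κ (e⁻¹ y)`, whose integrals are versions of the
conditional expectations given `m.map e`, since conditional expectation is equivariant:
`μ[g | m.map e] = μ[g ∘ e | m] ∘ e⁻¹`. On a countably generated space, two families of finite
measures whose integrals of bounded measurable functions agree a.e. are a.e. equal: testing
against indicators of a countable generating π-system gives a.e. equality on the whole π-system
at once.
-/

open MeasureTheory

theorem MeasurableSpace.exists_countable_isPiSystem_generateFrom (α : Type*)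
    [m : MeasurableSpace α] [CountablyGenerated α] :
    ∃ C : Set (Set α), C.Countable ∧ IsPiSystem C ∧ m = generateFrom C := by
  set s := natGeneratingSequence α
  refine ⟨Set.range fun F : Finset ℕ => ⋂ i ∈ F, s i, Set.countable_range _, ?_, ?_⟩
  · rintro _ ⟨F, rfl⟩ _ ⟨G, rfl⟩ -
    exact ⟨F ∪ G, Finset.set_biInter_inter F G s⟩
  · refine le_antisymm ?_ (generateFrom_le ?_)
    · conv_lhs => rw [← generateFrom_natGeneratingSequence α]
      refine generateFrom_mono ?_
      rintro _ ⟨i, rfl⟩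
      exact ⟨{i}, Finset.set_biInter_singleton i s⟩
    · rintro _ ⟨F, rfl⟩
      exact Finset.measurableSet_biInter F fun i _ => measurableSet_natGeneratingSequence i

section FamilyOfMeasures

variable {α β : Type*} [MeasurableSpace α] [MeasurableSpace β]
  [MeasurableSpace.CountablyGenerated β] {μ : Measure α} {κ η : α → Measure β}

theorem ae_eq_of_forall_measurableSet_ae_eq (hκ : ∀ a, IsFiniteMeasure (κ a))
    (h : ∀ s, MeasurableSet s → ∀ᵐ a ∂μ, κ a s = η a s) : ∀ᵐ a ∂μ, κ a = η a := by
  obtain ⟨C, hC_countable, hC_pi, hC_gen⟩ :=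
    MeasurableSpace.exists_countable_isPiSystem_generateFrom β
  have hC_meas : ∀ s ∈ C, MeasurableSet s := fun s hs =>
    hC_gen ▸ MeasurableSpace.measurableSet_generateFrom hs
  filter_upwards [(ae_ball_iff hC_countable).2 fun s hs => h s (hC_meas s hs),
    h Set.univ MeasurableSet.univ] with a h_eq h_univ
  exact ext_of_generate_finite C hC_gen hC_pi h_eq h_univ

theorem ae_eq_of_forall_integral_ae_eq (hκ : ∀ a, IsFiniteMeasure (κ a))
    (hη : ∀ a, IsFiniteMeasure (η a))
    (h : ∀ g : β → ℝ, Measurable g → (∃ C : ℝ, ∀ y, |g y| ≤ C) →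
      (fun a => ∫ y, g y ∂(κ a)) =ᵐ[μ] fun a => ∫ y, g y ∂(η a)) :
    ∀ᵐ a ∂μ, κ a = η a := by
  refine ae_eq_of_forall_measurableSet_ae_eq hκ fun s hs => ?_
  have h_bound : ∀ y, |(s.indicator 1 : β → ℝ) y| ≤ 1 := fun y => by
    by_cases hy : y ∈ s <;> simp [hy]
  filter_upwards [h (s.indicator 1) (measurable_one.indicator hs) ⟨1, h_bound⟩] with a ha
  rw [integral_indicator_one hs, integral_indicator_one hs] at ha
  exact (measureReal_eq_measureReal_iff).1 ha

end FamilyOfMeasures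

namespace MeasureTheory.MeasurePreserving

variable {X Y : Type*} {m : MeasurableSpace X} [mX : MeasurableSpace X] [MeasurableSpace Y]
  {μ : Measure X} {ν : Measure Y} [IsFiniteMeasure μ] {e : X ≃ᵐ Y}

theorem condExp_map_ae_eq (he : MeasurePreserving e μ ν) (hm : m ≤ mX)
    {g : Y → ℝ} (hg : Integrable g ν) :
    ν[g | m.map e] =ᵐ[ν] μ[g ∘ e | m] ∘ e.symm := by
  have : IsFiniteMeasure ν := he.map_eq ▸ inferInstance
  have hm' : m.map e ≤ ‹MeasurableSpace Y› := fun s hs => e.measurableSet_preimage.1 (hm _ hs)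
  have h_symm : Measurable[m.map e, m] e.symm := fun s hs => by
    change MeasurableSet[m] (e ⁻¹' (e.symm ⁻¹' s))
    rwa [← Set.preimage_comp, e.symm_comp_self, Set.preimage_id]
  have hge : Integrable (g ∘ e) μ := (he.integrable_comp_emb e.measurableEmbedding).2 hg
  set ψ := μ[g ∘ e | m]
  refine (ae_eq_condExp_of_forall_setIntegral_eq hm' hg (fun s _ _ => ?_) (fun s hs _ => ?_)
    (stronglyMeasurable_condExp.measurable.comp h_symm).aestronglyMeasurable).symm
  · exact ((he.symm e).integrable_comp_emb e.symm.measurableEmbedding).2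
      integrable_condExp |>.integrableOn
  · calc ∫ y in s, ψ (e.symm y) ∂ν
        = ∫ x in e ⁻¹' s, ψ (e.symm (e x)) ∂μ :=
          (he.setIntegral_preimage_emb e.measurableEmbedding _ s).symm
      _ = ∫ x in e ⁻¹' s, g (e x) ∂μ := by
          simp only [MeasurableEquiv.symm_apply_apply]
          exact setIntegral_condExp hm hge hs
      _ = ∫ y in s, g y ∂ν := he.setIntegral_preimage_emb e.measurableEmbedding g s

theorem integral_map_comp_symm_ae_eq_condExp (he : MeasurePreserving e μ ν)
    (hm : m ≤ mX) {κ : X → Measure X}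
    (hκ : ∀ g : X → ℝ, Measurable g → (∃ C : ℝ, ∀ x, |g x| ≤ C) →
      (fun x => ∫ y, g y ∂(κ x)) =ᵐ[μ] μ[g | m])
    {g : Y → ℝ} (hg : Measurable g) (hg_bdd : ∃ C : ℝ, ∀ y, |g y| ≤ C) :
    (fun y => ∫ z, g z ∂(κ (e.symm y)).map e) =ᵐ[ν] ν[g | m.map e] := by
  obtain ⟨C, hC⟩ := hg_bdd
  have : IsFiniteMeasure ν := he.map_eq ▸ inferInstance
  have hg_int : Integrable g ν := .of_bound hg.aestronglyMeasurable C (.of_forall hC)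
  have h_comp := (he.symm e).quasiMeasurePreserving.ae_eq_comp
    (hκ (g ∘ e) (hg.comp e.measurable) ⟨C, fun x => hC (e x)⟩)
  refine .trans (.of_eq (funext fun y => ?_)) (h_comp.trans (condExp_map_ae_eq he hm hg_int).symm)
  exact integral_map e.measurable.aemeasurable hg.aestronglyMeasurable

end MeasureTheory.MeasurePreserving

def MeasurableEquiv.iterate {α : Type*} [MeasurableSpace α] (f : α ≃ᵐ α) (n : ℕ) : α ≃ᵐ α where
  toFun := f^[n]
  invFun := f.symm^[n]
  left_inv := Function.LeftInverse.iterate f.symm_apply_apply n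
  right_inv := Function.LeftInverse.iterate f.apply_symm_apply n
  measurable_toFun := f.measurable.iterate n
  measurable_invFun := f.symm.measurable.iterate n

theorem stmt2_general {X : Type*} {m : MeasurableSpace X} [mX : MeasurableSpace X]
    [StandardBorelSpace X]
    (μ : Measure X) [IsProbabilityMeasure μ]
    (f : X ≃ᵐ X) (hf : MeasurePreserving f μ μ)
    (hm : m ≤ mX)
    (n : ℕ) (κ κn : X → Measure X)
    (hκprob : ∀ x, IsProbabilityMeasure (κ x))
    (hκ : ∀ g : X → ℝ, Measurable g → (∃ C : ℝ, ∀ x, |g x| ≤ C) →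
      (fun x => ∫ y, g y ∂(κ x)) =ᵐ[μ] μ[g | m])
    (hκnprob : ∀ x, IsProbabilityMeasure (κn x))
    (hκn : ∀ g : X → ℝ, Measurable g → (∃ C : ℝ, ∀ x, |g x| ≤ C) →
      (fun x => ∫ y, g y ∂(κn x)) =ᵐ[μ] μ[g | MeasurableSpace.map ((⇑f)^[n]) m]) :
    ∀ᵐ x ∂μ, κn x = Measure.map ((⇑f)^[n]) (κ ((⇑f.symm)^[n] x)) := by
  have he : MeasurePreserving (f.iterate n) μ μ := hf.iterate n
  refine ae_eq_of_forall_integral_ae_eq (fun x => inferInstance)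
    (fun x => have := hκprob ((⇑f.symm)^[n] x); inferInstance)
    fun g hg hg_bdd => (hκn g hg hg_bdd).trans ?_
  exact (he.integral_map_comp_symm_ae_eq_condExp hm hκ hg hg_bdd).symm

/-- Equivariance of regular conditional distributions under a measure-preserving
bijection: if `κ` is a regular conditional distribution of `μ` given the
sub-σ-algebra `m`, and `κn` is a regular conditional distribution of `μ` given the
image σ-algebra `m.map (f^[n])`, then for `μ`-a.e. `x`,
`κn x = (f^[n])_* (κ (f⁻¹^[n] x))`. -/
theorem stmt2 {X : Type*} {m : MeasurableSpace X} [mX : MeasurableSpace X]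
    [StandardBorelSpace X]
    (μ : Measure X) [IsProbabilityMeasure μ]
    (f : X ≃ᵐ X) (hf : MeasurePreserving f μ μ)
    (hm : m ≤ mX)
    (n : ℕ) (κ κn : X → Measure X)
    (hκmeas : Measurable[m] κ)
    (hκprob : ∀ x, IsProbabilityMeasure (κ x))
    (hκ : ∀ g : X → ℝ, Measurable g → (∃ C : ℝ, ∀ x, |g x| ≤ C) →
      (fun x => ∫ y, g y ∂(κ x)) =ᵐ[μ] μ[g | m])
    (hκnmeas : Measurable[MeasurableSpace.map ((⇑f)^[n]) m] κn)
    (hκnprob : ∀ x, IsProbabilityMeasure (κn x))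
    (hκn : ∀ g : X → ℝ, Measurable g → (∃ C : ℝ, ∀ x, |g x| ≤ C) →
      (fun x => ∫ y, g y ∂(κn x)) =ᵐ[μ] μ[g | MeasurableSpace.map ((⇑f)^[n]) m]) :
    ∀ᵐ x ∂μ, κn x = Measure.map ((⇑f)^[n]) (κ ((⇑f.symm)^[n] x)) :=
  stmt2_general (mX := mX) μ f hf hm n κ κn hκprob hκ hκnprob hκn
end

section
/- Let (X, 𝒜, μ) be a probability space and let f : X → X be a bijection such that f and f⁻¹ are measurable, f preserves μ, and f is ergodic with respect to μ. Let φ : X → ℝ be measurable with 0 ≤ φ(x) ≤ 1 for all x. If the set { x ∈ X : φ(f^{−n}(x)) → 1 as n → ∞ } has positive μ-measure, then φ(x) = 1 for μ-almost every x ∈ X. -/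
/-!
The set `S` of points along whose backward orbit `φ` tends to `1` is `f⁻¹`-invariant, so by
ergodicity it has full measure. By Poincaré recurrence, almost every point with `φ x < q` returns
infinitely often to `{φ < q}`, so a limit of `φ` along its orbit is at most `φ x`. Hence for almost
every `x`, `1 ≤ φ x ≤ 1`.
-/

open MeasureTheory Filter Topology

theorem Function.preimage_setOf_tendsto_comp_iterate {X Y : Type*} (g : X → X) (φ : X → Y)
    (l : Filter Y) :
    g ⁻¹' {x | Tendsto (fun n => φ (g^[n] x)) atTop l} =
      {x | Tendsto (fun n => φ (g^[n] x)) atTop l} := by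
  ext x
  simp only [Set.mem_preimage, Set.mem_ofPred_eq, ← Function.iterate_succ_apply]
  exact tendsto_add_atTop_iff_nat (f := fun n => φ (g^[n] x)) 1

theorem MeasureTheory.Conservative.ae_le_of_tendsto_comp_iterate {X : Type*} [MeasurableSpace X]
    {μ : Measure X} {g : X → X} (hg : Conservative g μ) {φ : X → ℝ} (hφ : Measurable φ) :
    ∀ᵐ x ∂μ, ∀ l, Tendsto (fun n => φ (g^[n] x)) atTop (𝓝 l) → l ≤ φ x := by
  have hrec : ∀ᵐ x ∂μ, ∀ q : ℚ, φ x < q → ∃ᶠ n in atTop, φ (g^[n] x) < q :=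
    ae_all_iff.2 fun q =>
      hg.ae_mem_imp_frequently_image_mem (hφ measurableSet_Iio).nullMeasurableSet
  filter_upwards [hrec] with x hx l hl
  by_contra! hlt
  obtain ⟨q, hxq, hql⟩ := exists_rat_btwn hlt
  obtain ⟨n, hlow, hhigh⟩ :=
    ((hx q hxq).and_eventually (hl.eventually (eventually_gt_nhds hql))).exists
  exact hlow.not_gt hhigh

/-- If `f` is an ergodic measure-preserving bijection of a probability space and
`φ : X → [0,1]` is measurable such that `φ (f⁻ⁿ x) → 1` on a set of positive measure,
then `φ = 1` almost everywhere. -/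
theorem stmt4 {X : Type*} [MeasurableSpace X] (μ : Measure X) [IsProbabilityMeasure μ]
    (f : X ≃ᵐ X) (hf : Ergodic f μ)
    (φ : X → ℝ) (hφmeas : Measurable φ) (hφ01 : ∀ x, φ x ∈ Set.Icc (0:ℝ) 1)
    (hpos : 0 < μ {x | Tendsto (fun n => φ ((⇑f.symm)^[n] x)) atTop (nhds 1)}) :
    ∀ᵐ x ∂μ, φ x = 1 := by
  set S := {x | Tendsto (fun n => φ ((⇑f.symm)^[n] x)) atTop (𝓝 1)}
  have hS_meas : MeasurableSet S :=
    measurableSet_tendsto _ fun n => hφmeas.comp (f.symm.measurable.iterate n)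
  have hS_ae : ∀ᵐ x ∂μ, x ∈ S :=
    (hf.symm.ae_mem_or_ae_notMem hS_meas
      (Function.preimage_setOf_tendsto_comp_iterate _ _ _)).resolve_right
      (measure_eq_zero_iff_ae_notMem.not.1 hpos.ne')
  filter_upwards [hS_ae, hf.symm.conservative.ae_le_of_tendsto_comp_iterate hφmeas]
    with x hxS hle
  exact le_antisymm (hφ01 x).2 (hle 1 hxS)
end

section
/- Let χ₁ᵈ < χ₂ᵈ < 0 and 0 < χ₂ᶜ ≤ χ₁ᶜ be real numbers, and let ε > 0. Let u, v : ℕ → ℝ satisfy: for all ℓ, m ∈ ℕ, χ₁ᵈ·m ≤ u(ℓ+m) − u(ℓ) ≤ χ₂ᵈ·m; for all n, m ∈ ℕ, χ₂ᶜ·m ≤ v(n+m) − v(n) ≤ χ₁ᶜ·m; and u(ℓ) + v(0) < log ε for every ℓ ∈ ℕ. For ℓ ∈ ℕ define the stopping time τ(ℓ) as the least n ∈ ℕ with u(ℓ) + v(n) ≥ log ε (which exists since v(n) → ∞). Then for all ℓ, m ∈ ℕ: (−χ₂ᵈ/χ₁ᶜ)·m − 1 < τ(ℓ+m) − τ(ℓ)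 < (−χ₁ᵈ/χ₂ᶜ)·m + χ₁ᶜ/χ₂ᶜ. In particular ℓ ↦ τ(ℓ) is a quasi-isometry of ℕ. -/
/-- Quasi-isometric estimate for the stopping time `τ` (part 1): with
`u(ℓ) = log d^ℓ_x` and `v(n) = log ‖Df^n(x^u)|_{E^c}‖`, the stopping time
`τ(ℓ) = min {n : u(ℓ) + v(n) ≥ log ε}` satisfies
`(−χ₂ᵈ/χ₁ᶜ)·m − 1 < τ(ℓ+m) − τ(ℓ) < (−χ₁ᵈ/χ₂ᶜ)·m + χ₁ᶜ/χ₂ᶜ`. -/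
theorem stmt5 (χ1d χ2d χ1c χ2c ε : ℝ)
    (h1 : χ1d < χ2d) (h2 : χ2d < 0) (h3 : 0 < χ2c) (h4 : χ2c ≤ χ1c) (hε : 0 < ε)
    (u v : ℕ → ℝ)
    (hu : ∀ ℓ m : ℕ, χ1d * m ≤ u (ℓ + m) - u ℓ ∧ u (ℓ + m) - u ℓ ≤ χ2d * m)
    (hv : ∀ n m : ℕ, χ2c * m ≤ v (n + m) - v n ∧ v (n + m) - v n ≤ χ1c * m)
    (h0 : ∀ ℓ : ℕ, u ℓ + v 0 < Real.log ε)
    (τ : ℕ → ℕ)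
    (hτ : ∀ ℓ : ℕ, IsLeast {n : ℕ | Real.log ε ≤ u ℓ + v n} (τ ℓ)) :
    ∀ ℓ m : ℕ, (-χ2d / χ1c) * m - 1 < (τ (ℓ + m) : ℝ) - τ ℓ ∧
      (τ (ℓ + m) : ℝ) - τ ℓ < (-χ1d / χ2c) * m + χ1c / χ2c := by
  intro ℓ m
  set L := Real.log ε with hL
  have hχ1c : 0 < χ1c := lt_of_lt_of_le h3 h4
  obtain ⟨ha_mem, ha_lb⟩ := hτ ℓ
  obtain ⟨hb_mem, hb_lb⟩ := hτ (ℓ + m)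
  set a := τ ℓ with hadef
  set b := τ (ℓ + m) with hbdef
  have ha_mem' : L ≤ u ℓ + v a := ha_mem
  have hb_mem' : L ≤ u (ℓ + m) + v b := hb_mem
  -- a ≥ 1
  have ha1 : 1 ≤ a := by
    rcases Nat.eq_zero_or_pos a with h | h
    · exfalso; have := h0 ℓ; rw [h] at ha_mem'; linarith
    · exact h
  have hb1 : 1 ≤ b := by
    rcases Nat.eq_zero_or_pos b with h | h
    · exfalso; have := h0 (ℓ + m); rw [h] at hb_mem'; linarith
    · exact h
  -- predecessors not in the sets
  have ha_pred : u ℓ + v (a - 1) < L := by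
    by_contra h
    push_neg at h
    have := ha_lb h
    omega
  have hb_pred : u (ℓ + m) + v (b - 1) < L := by
    by_contra h
    push_neg at h
    have := hb_lb h
    omega
  have hum := hu ℓ m
  have hmnn : (0:ℝ) ≤ (m:ℝ) := Nat.cast_nonneg m
  have hχ2dm : χ2d * m ≤ 0 := mul_nonpos_of_nonpos_of_nonneg h2.le hmnn
  -- a ≤ b
  have hab : a ≤ b := by
    apply ha_lb
    show L ≤ u ℓ + v b
    linarith [hum.2]
  constructor
  · -- lower bound
    have hle : a - 1 ≤ b := by omega
    have hvv := (hv (a - 1) (b - (a - 1))).2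
    rw [Nat.add_sub_cancel' hle] at hvv
    have hcast : ((b - (a - 1) : ℕ) : ℝ) = (b : ℝ) - (a : ℝ) + 1 := by
      rw [Nat.cast_sub hle, Nat.cast_sub ha1]; push_cast; ring
    rw [hcast] at hvv
    -- v b - v (a-1) > -χ2d * m
    have hkey : -χ2d * m < χ1c * ((b:ℝ) - a + 1) := by
      have h5 : L - u (ℓ + m) ≤ v b := by linarith
      have h6 : v (a - 1) < L - u ℓ := by linarith
      nlinarith [hum.2]
    have : (-χ2d * m) / χ1c < (b:ℝ) - a + 1 := by
      rw [div_lt_iff₀ hχ1c]; linarith [hkey]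
    have heq : -χ2d / χ1c * m = (-χ2d * m) / χ1c := by ring
    linarith [heq ▸ this]
  · -- upper bound
    rcases Nat.lt_or_ge a b with hlt | hge
    · have hle : a ≤ b - 1 := by omega
      have hvv := (hv a (b - 1 - a)).1
      rw [Nat.add_sub_cancel' hle] at hvv
      have hcast : ((b - 1 - a : ℕ) : ℝ) = (b : ℝ) - 1 - a := by
        rw [Nat.cast_sub hle, Nat.cast_sub hb1]; push_cast; ring
      rw [hcast] at hvv
      have hkey : χ2c * ((b:ℝ) - 1 - a) < -χ1d * m := by
        have h5 : L ≤ u ℓ + v a := ha_mem'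
        have h6 : v (b - 1) < L - u (ℓ + m) := by linarith
        nlinarith [hum.1]
      have : (b:ℝ) - 1 - a < (-χ1d * m) / χ2c := by
        rw [lt_div_iff₀ h3]; linarith [hkey]
      have hone : (1:ℝ) ≤ χ1c / χ2c := (one_le_div h3).mpr h4
      have heq : -χ1d / χ2c * m = (-χ1d * m) / χ2c := by ring
      linarith [heq ▸ this]
    · have hba : b = a := le_antisymm hge hab
      have h5 : 0 < χ1c / χ2c := div_pos hχ1c h3
      have h6 : 0 ≤ -χ1d / χ2c * m :=
        mul_nonneg (div_nonneg (by linarith) h3.le) hmnn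
      rw [hba]
      linarith
end

section
/- Let χ₁ᵈ < χ₂ᵈ < 0 and 0 < χ₂ᶜ ≤ χ₁ᶜ be real numbers, and let ε > 0. Let u, v, w : ℕ → ℝ satisfy: for all ℓ, m ∈ ℕ, χ₁ᵈ·m ≤ u(ℓ+m) − u(ℓ) ≤ χ₂ᵈ·m; for all n, m ∈ ℕ, χ₂ᶜ·m ≤ v(n+m) − v(n) ≤ χ₁ᶜ·m and χ₂ᶜ·m ≤ w(n+m) − w(n) ≤ χ₁ᶜ·m; v(0) = 0 and w(0) = 0; and u(ℓ) + v(0) < log ε for every ℓ ∈ ℕ. Define τ(ℓ) as the least n ∈ ℕ with u(ℓ) + v(n) ≥ log ε, and t(ℓ) as the least n ∈ ℕ with w(n) ≥ v(τ(ℓ)). Then for all ℓ, m ∈ ℕ: (χ₂ᶜ/χ₁ᶜ)·(τ(ℓ+m) − τ(ℓ)) − 1 < t(ℓ+m) − t(ℓ) < (χ₁ᶜ/χ₂ᶜ)·(τ(ℓ+m) − τ(ℓ)) + χ₁ᶜ/χ₂ᶜ. -/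
/-- Quasi-isometric estimate for the second stopping time `t` (part 2): with
`u(ℓ) = log d^ℓ_x`, `v(n) = log ‖Df^n(x^u)|_{E^c}‖`, `w(n) = log ‖Df^n(x)|_{E^c}‖`,
`τ(ℓ) = min {n : u(ℓ) + v(n) ≥ log ε}` and `t(ℓ) = min {n : w(n) ≥ v(τ(ℓ))}`, one has
`(χ₂ᶜ/χ₁ᶜ)·(τ(ℓ+m)−τ(ℓ)) − 1 < t(ℓ+m) − t(ℓ) < (χ₁ᶜ/χ₂ᶜ)·(τ(ℓ+m)−τ(ℓ)) + χ₁ᶜ/χ₂ᶜ`. -/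
theorem stmt6 (χ1d χ2d χ1c χ2c ε : ℝ)
    (h1 : χ1d < χ2d) (h2 : χ2d < 0) (h3 : 0 < χ2c) (h4 : χ2c ≤ χ1c) (hε : 0 < ε)
    (u v w : ℕ → ℝ)
    (hu : ∀ ℓ m : ℕ, χ1d * m ≤ u (ℓ + m) - u ℓ ∧ u (ℓ + m) - u ℓ ≤ χ2d * m)
    (hv : ∀ n m : ℕ, χ2c * m ≤ v (n + m) - v n ∧ v (n + m) - v n ≤ χ1c * m)
    (hw : ∀ n m : ℕ, χ2c * m ≤ w (n + m) - w n ∧ w (n + m) - w n ≤ χ1c * m)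
    (hv0 : v 0 = 0) (hw0 : w 0 = 0)
    (h0 : ∀ ℓ : ℕ, u ℓ + v 0 < Real.log ε)
    (τ t : ℕ → ℕ)
    (hτ : ∀ ℓ : ℕ, IsLeast {n : ℕ | Real.log ε ≤ u ℓ + v n} (τ ℓ))
    (ht : ∀ ℓ : ℕ, IsLeast {n : ℕ | v (τ ℓ) ≤ w n} (t ℓ)) :
    ∀ ℓ m : ℕ, (χ2c / χ1c) * ((τ (ℓ + m) : ℝ) - τ ℓ) - 1 < (t (ℓ + m) : ℝ) - t ℓ ∧
      (t (ℓ + m) : ℝ) - t ℓ < (χ1c / χ2c) * ((τ (ℓ + m) : ℝ) - τ ℓ) + χ1c / χ2c := by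
  intro ℓ m
  have hχ1c : 0 < χ1c := lt_of_lt_of_le h3 h4
  have hvmono : ∀ a b : ℕ, a ≤ b → v a ≤ v b := by
    intro a b hab
    obtain ⟨k, rfl⟩ := Nat.exists_eq_add_of_le hab
    have := (hv a k).1
    nlinarith [Nat.cast_nonneg (α := ℝ) k]
  have hτmono : τ ℓ ≤ τ (ℓ + m) := by
    apply (hτ ℓ).2
    have ha := (hτ (ℓ + m)).1
    have hb := (hu ℓ m).2
    have hm : (0:ℝ) ≤ (m : ℝ) := Nat.cast_nonneg m
    simp only [Set.mem_setOf_eq] at *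
    nlinarith
  have htmono : t ℓ ≤ t (ℓ + m) := by
    apply (ht ℓ).2
    have ha := (ht (ℓ + m)).1
    have hb := hvmono _ _ hτmono
    simp only [Set.mem_setOf_eq] at *
    linarith
  have key : ∀ j : ℕ, v (τ j) ≤ w (t j) ∧ w (t j) < v (τ j) + χ1c := by
    intro j
    refine ⟨(ht j).1, ?_⟩
    rcases Nat.eq_zero_or_pos (t j) with h | h
    · have hvτ : 0 ≤ v (τ j) := by
        have := (hv 0 (τ j)).1
        have hm : (0:ℝ) ≤ (τ j : ℝ) := Nat.cast_nonneg _
        simp only [Nat.zero_add, hv0, sub_zero] at this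
        nlinarith
      rw [h, hw0]; linarith
    · have hlt : w (t j - 1) < v (τ j) := by
        by_contra hc
        push_neg at hc
        have := (ht j).2 hc
        omega
      have hstep := (hw (t j - 1) 1).2
      have he : t j - 1 + 1 = t j := by omega
      rw [he] at hstep
      push_cast at hstep
      linarith
  obtain ⟨k1, hk1⟩ := Nat.exists_eq_add_of_le hτmono
  obtain ⟨k2, hk2⟩ := Nat.exists_eq_add_of_le htmono
  have hvA := hv (τ ℓ) k1
  have hwB := hw (t ℓ) k2
  rw [← hk1] at hvA
  rw [← hk2] at hwB
  obtain ⟨hA, hB⟩ := key ℓ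
  obtain ⟨hA', hB'⟩ := key (ℓ + m)
  have hc1 : (τ (ℓ + m) : ℝ) - τ ℓ = k1 := by rw [hk1]; push_cast; ring
  have hc2 : (t (ℓ + m) : ℝ) - t ℓ = k2 := by rw [hk2]; push_cast; ring
  rw [hc1, hc2]
  constructor
  · rw [div_mul_eq_mul_div, sub_lt_iff_lt_add, div_lt_iff₀ hχ1c]
    linarith [hvA.1, hwB.2]
  · have heq : (χ1c / χ2c) * (k1 : ℝ) + χ1c / χ2c = (χ1c * k1 + χ1c) / χ2c := by ring
    rw [heq, lt_div_iff₀ h3]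
    linarith [hvA.2, hwB.1]
end

section
/- Let 0 < χ₂ ≤ χ₁ be real numbers, C₀ ≥ 1, and ε > 0. Let u, u′ : ℕ → ℝ satisfy |u(ℓ) − u′(ℓ)| ≤ log C₀ for all ℓ ∈ ℕ, and let v, v′ : ℕ → ℝ satisfy χ₂ ≤ v(n+1) − v(n) ≤ χ₁ and χ₂ ≤ v′(n+1) − v′(n) ≤ χ₁ for all n, and |v(n) − v′(n)| ≤ log C₀ for all n ∈ ℕ. Define τ(ℓ) as the least n ∈ ℕ with u(ℓ) + v(n) ≥ log ε, and τ′(ℓ) as the least n ∈ ℕ with u′(ℓ) + v′(n) ≥ log ε (both exist since v, v′ → ∞). Then for every natural number k with k·χ₂ ≥ 2·log C₀ and every ℓ ∈ ℕ, one has |τ(ℓ) − τ′(ℓ)| ≤ k. -/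
lemma aux_grow (χ2 : ℝ) (v : ℕ → ℝ) (hv : ∀ n : ℕ, χ2 ≤ v (n + 1) - v n)
    (m k : ℕ) : v m + (k : ℝ) * χ2 ≤ v (m + k) := by
  induction k with
  | zero => simp
  | succ k ih =>
    have := hv (m + k)
    push_cast
    have : v (m + k) + χ2 ≤ v (m + k + 1) := by linarith [hv (m + k)]
    calc v m + ((k : ℝ) + 1) * χ2 = (v m + (k : ℝ) * χ2) + χ2 := by ring
    _ ≤ v (m + k) + χ2 := by linarith
    _ ≤ v (m + (k + 1)) := by rw [← add_assoc]; exact this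

lemma aux_le (χ2 C0 ε : ℝ) (h2 : 0 < χ2)
    (u u' v v' : ℕ → ℝ)
    (huu' : ∀ ℓ : ℕ, |u ℓ - u' ℓ| ≤ Real.log C0)
    (hv : ∀ n : ℕ, χ2 ≤ v (n + 1) - v n)
    (hvv' : ∀ n : ℕ, |v n - v' n| ≤ Real.log C0)
    (τ τ' : ℕ → ℕ)
    (hτ : ∀ ℓ : ℕ, IsLeast {n : ℕ | Real.log ε ≤ u ℓ + v n} (τ ℓ))
    (hτ' : ∀ ℓ : ℕ, IsLeast {n : ℕ | Real.log ε ≤ u' ℓ + v' n} (τ' ℓ))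
    (k : ℕ) (hk : 2 * Real.log C0 ≤ (k : ℝ) * χ2) (ℓ : ℕ) :
    τ ℓ ≤ τ' ℓ + k := by
  apply (hτ ℓ).2
  have h1 : Real.log ε ≤ u' ℓ + v' (τ' ℓ) := (hτ' ℓ).1
  have h2' := aux_grow χ2 v hv (τ' ℓ) k
  have h3 := abs_le.1 (huu' ℓ)
  have h4 := abs_le.1 (hvv' (τ' ℓ))
  show Real.log ε ≤ u ℓ + v (τ' ℓ + k)
  linarith [h3.1, h3.2, h4.1, h4.2]

/-- Synchronization of stopping times: if `|u − u′| ≤ log C₀`, `|v − v′| ≤ log C₀`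
and `v, v′` have increments in `[χ₂, χ₁]`, then the stopping times
`τ(ℓ) = min {n : u(ℓ) + v(n) ≥ log ε}` and `τ′(ℓ) = min {n : u′(ℓ) + v′(n) ≥ log ε}`
differ by at most any `k` with `k·χ₂ ≥ 2·log C₀`. -/
theorem stmt7 (χ1 χ2 C0 ε : ℝ)
    (h2 : 0 < χ2) (h12 : χ2 ≤ χ1) (hC0 : 1 ≤ C0) (hε : 0 < ε)
    (u u' v v' : ℕ → ℝ)
    (huu' : ∀ ℓ : ℕ, |u ℓ - u' ℓ| ≤ Real.log C0)
    (hv : ∀ n : ℕ, χ2 ≤ v (n + 1) - v n ∧ v (n + 1) - v n ≤ χ1)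
    (hv' : ∀ n : ℕ, χ2 ≤ v' (n + 1) - v' n ∧ v' (n + 1) - v' n ≤ χ1)
    (hvv' : ∀ n : ℕ, |v n - v' n| ≤ Real.log C0)
    (τ τ' : ℕ → ℕ)
    (hτ : ∀ ℓ : ℕ, IsLeast {n : ℕ | Real.log ε ≤ u ℓ + v n} (τ ℓ))
    (hτ' : ∀ ℓ : ℕ, IsLeast {n : ℕ | Real.log ε ≤ u' ℓ + v' n} (τ' ℓ))
    (k : ℕ) (hk : 2 * Real.log C0 ≤ (k : ℝ) * χ2) :
    ∀ ℓ : ℕ, |(τ ℓ : ℝ) - (τ' ℓ : ℝ)| ≤ (k : ℝ) := by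
  intro ℓ
  have ha : τ ℓ ≤ τ' ℓ + k :=
    aux_le χ2 C0 ε h2 u u' v v' huu' (fun n => (hv n).1) hvv' τ τ' hτ hτ' k hk ℓ
  have hb : τ' ℓ ≤ τ ℓ + k := by
    refine aux_le χ2 C0 ε h2 u' u v' v ?_ (fun n => (hv' n).1) ?_ τ' τ hτ' hτ k hk ℓ
    · intro j; rw [abs_sub_comm]; exact huu' j
    · intro n; rw [abs_sub_comm]; exact hvv' n
  have ha' : (τ ℓ : ℝ) ≤ (τ' ℓ : ℝ) + (k : ℝ) := by exact_mod_cast ha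
  have hb' : (τ' ℓ : ℝ) ≤ (τ ℓ : ℝ) + (k : ℝ) := by exact_mod_cast hb
  rw [abs_sub_le_iff]
  constructor <;> linarith
end

section
/- Let (X, 𝒜, μ) be a probability space and let f : X → X be a measurable, measure-preserving and ergodic map. Let γ ∈ (0, 1) and let B be a measurable set with μ(B) > 1 − γ. Then there exist T ∈ ℕ and a measurable subset B° ⊆ B with μ(B°) > 1 − γ such that every x ∈ B° is (γ, T)-recurrent to B, i.e., for every natural number L > T one has #{ ℓ ∈ {0, 1, …, L} : f^ℓ(x) ∈ B } > (1 − γ)·L. -/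
/-!
Choose `1 - γ < c < μ B` and put `g = c - 1_B`, so that `∫ g < 0`. The set where the Birkhoff
sums `S_n g` are unbounded above is invariant, hence null or conull; if it were conull, the sets
`{max_{k ≤ n} S_k g > 0}` would exhaust the space and Garsia's maximal inequality
`∫_{max_{k ≤ n} S_k g > 0} g ≥ 0` would give `∫ g ≥ 0`. So for almost every `x` the number of
visits to `B` up to time `L` is at least `c (L + 1) - K x`, which beats `(1 - γ) L` for large
`L`. The measurable sets of `(γ, T)`-recurrent points thus increase to a conull set, and `B°` is
their trace on `B` for a large `T`.
-/

open MeasureTheory Filter Set Topology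

section BirkhoffSum

variable {α : Type*} {f : α → α} {g : α → ℝ}

def birkhoffMax (f : α → α) (g : α → ℝ) : ℕ → α → ℝ :=
  partialSups (birkhoffSum f g)

theorem birkhoffMax_apply (f : α → α) (g : α → ℝ) (n : ℕ) (x : α) :
    birkhoffMax f g n x = partialSups (birkhoffSum f g · x) n :=
  Pi.partialSups_apply _ _ _

theorem birkhoffSum_le_birkhoffMax {k n : ℕ} (h : k ≤ n) (x : α) :
    birkhoffSum f g k x ≤ birkhoffMax f g n x := by
  rw [birkhoffMax_apply]
  exact le_partialSups_of_le (birkhoffSum f g · x) h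

theorem birkhoffMax_nonneg (n : ℕ) (x : α) : 0 ≤ birkhoffMax f g n x := by
  simpa [birkhoffSum_zero] using birkhoffSum_le_birkhoffMax (f := f) (g := g) n.zero_le x

theorem birkhoffMax_monotone (x : α) : Monotone (birkhoffMax f g · x) := fun m n h => by
  simp only [birkhoffMax_apply]
  exact (partialSups _).monotone h

/-- A positive maximum is attained at some `k + 1`, and `S_{k+1} x = g x + S_k (f x)`. -/
theorem birkhoffMax_le_add_birkhoffMax_apply {n : ℕ} {x : α} (h : 0 < birkhoffMax f g n x) :
    birkhoffMax f g n x ≤ g x + birkhoffMax f g n (f x) := by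
  obtain ⟨_ | k, hk, hmax⟩ := exists_partialSups_eq (birkhoffSum f g · x) n
  · simp [birkhoffMax_apply, hmax, birkhoffSum_zero] at h
  · rw [birkhoffMax_apply, hmax, birkhoffSum_succ']
    gcongr
    exact birkhoffSum_le_birkhoffMax (k.le_succ.trans hk) (f x)

theorem bddAbove_birkhoffSum_apply_iff (f : α → α) (g : α → ℝ) (x : α) :
    BddAbove (range fun n => birkhoffSum f g n (f x)) ↔
      BddAbove (range fun n => birkhoffSum f g n x) := by
  simp only [bddAbove_def, forall_mem_range]
  constructor
  · rintro ⟨K, hK⟩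
    refine ⟨max 0 (g x + K), fun n => ?_⟩
    rcases n with _ | n
    · simp [birkhoffSum_zero]
    · rw [birkhoffSum_succ']
      exact le_max_of_le_right (by linarith [hK n])
  · rintro ⟨K, hK⟩
    exact ⟨K - g x, fun n => by linarith [hK (n + 1), birkhoffSum_succ' f g n x]⟩

variable [MeasurableSpace α] {μ : Measure α}

theorem measurable_birkhoffSum (hf : Measurable f) (hg : Measurable g) (n : ℕ) :
    Measurable (birkhoffSum f g n) :=
  Finset.measurable_sum _ fun k _ => hg.comp (hf.iterate k)

theorem measurable_birkhoffMax (hf : Measurable f) (hg : Measurable g) (n : ℕ) :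
    Measurable (birkhoffMax f g n) := by
  induction n with
  | zero => simpa [birkhoffMax] using measurable_birkhoffSum hf hg 0
  | succ n ih =>
    rw [birkhoffMax, ← Order.succ_eq_add_one, partialSups_succ]
    exact ih.sup (measurable_birkhoffSum hf hg _)

theorem integrable_birkhoffSum (hf : MeasurePreserving f μ μ) (hg : Integrable g μ) (n : ℕ) :
    Integrable (birkhoffSum f g n) μ :=
  integrable_finsetSum _ fun k _ => (hf.iterate k).integrable_comp_of_integrable hg

theorem integrable_birkhoffMax (hf : MeasurePreserving f μ μ) (hg : Integrable g μ) (n : ℕ) :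
    Integrable (birkhoffMax f g n) μ := by
  induction n with
  | zero => simp [birkhoffMax]
  | succ n ih =>
    rw [birkhoffMax, ← Order.succ_eq_add_one, partialSups_succ]
    exact ih.sup (integrable_birkhoffSum hf hg _)

/-- Garsia's form of the maximal ergodic theorem. -/
theorem setIntegral_birkhoffMax_pos_nonneg (hf : MeasurePreserving f μ μ) (hgm : Measurable g)
    (hg : Integrable g μ) (n : ℕ) : 0 ≤ ∫ x in {x | 0 < birkhoffMax f g n x}, g x ∂μ := by
  set M := birkhoffMax f g n
  set E := {x | 0 < M x}
  have hMm : Measurable M := measurable_birkhoffMax hf.measurable hgm n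
  have hE : MeasurableSet E := measurableSet_lt measurable_const hMm
  have hM : Integrable M μ := integrable_birkhoffMax hf hg n
  have hMf : Integrable (M ∘ f) μ := hf.integrable_comp_of_integrable hM
  have hM_E : ∫ x in E, M x ∂μ = ∫ x, M x ∂μ :=
    setIntegral_eq_integral_of_forall_compl_eq_zero fun x hx =>
      (not_lt.mp hx).antisymm (birkhoffMax_nonneg n x)
  have hMf_E : ∫ x in E, M (f x) ∂μ ≤ ∫ x, M (f x) ∂μ :=
    setIntegral_le_integral hMf (Eventually.of_forall fun x => birkhoffMax_nonneg n (f x))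
  have hMf_eq : ∫ x, M (f x) ∂μ = ∫ x, M x ∂μ := by
    conv_rhs => rw [← hf.map_eq]
    exact (integral_map hf.measurable.aemeasurable (hf.map_eq ▸ hMm.aestronglyMeasurable)).symm
  calc (0 : ℝ) ≤ ∫ x in E, M x ∂μ - ∫ x in E, M (f x) ∂μ := by linarith
    _ = ∫ x in E, (M x - M (f x)) ∂μ := (integral_sub hM.integrableOn hMf.integrableOn).symm
    _ ≤ ∫ x in E, g x ∂μ := setIntegral_mono_on (hM.sub hMf).integrableOn hg.integrableOn hE
        fun x hx => by linarith [birkhoffMax_le_add_birkhoffMax_apply (f := f) (g := g) hx]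

theorem Ergodic.ae_bddAbove_birkhoffSum (hf : Ergodic f μ) (hgm : Measurable g)
    (hg : Integrable g μ) (hneg : ∫ x, g x ∂μ < 0) :
    ∀ᵐ x ∂μ, BddAbove (range fun n => birkhoffSum f g n x) := by
  set A := {x | BddAbove (range fun n => birkhoffSum f g n x)}
  have hA : MeasurableSet A :=
    measurableSet_bddAbove_range (measurable_birkhoffSum hf.measurable hgm)
  have hAinv : f ⁻¹' A = A := ext (bddAbove_birkhoffSum_apply_iff f g)
  refine (hf.ae_mem_or_ae_notMem hA hAinv).resolve_right fun hAc => hneg.not_ge ?_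
  set E := fun n => {x | 0 < birkhoffMax f g n x}
  have hE : ∀ n, MeasurableSet (E n) := fun n =>
    measurableSet_lt measurable_const (measurable_birkhoffMax hf.measurable hgm n)
  have hEmono : Monotone E := fun m n h x hx => hx.trans_le (birkhoffMax_monotone x h)
  have hAcE : Aᶜ ⊆ ⋃ n, E n := fun x hx => by
    obtain ⟨_, ⟨n, rfl⟩, hn⟩ := not_bddAbove_iff.mp hx 0
    exact mem_iUnion.mpr ⟨n, hn.trans_le (birkhoffSum_le_birkhoffMax le_rfl x)⟩
  have hEae : ∀ᵐ x ∂μ, x ∈ ⋃ n, E n := hAc.mono fun x hx => hAcE hx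
  have hlim := tendsto_setIntegral_of_monotone hE hEmono hg.integrableOn
  rw [setIntegral_eq_integral_of_ae_compl_eq_zero (hEae.mono fun x hx hx' => absurd hx hx')]
    at hlim
  exact ge_of_tendsto' hlim fun n =>
    setIntegral_birkhoffMax_pos_nonneg hf.toMeasurePreserving hgm hg n

end BirkhoffSum

section Recurrence

variable {α : Type*} {f : α → α} {B : Set α} {γ : ℝ}

/-- `x` is `(γ, T)`-recurrent to `B`. -/
def IsRecurrentTo (f : α → α) (B : Set α) (γ : ℝ) (T : ℕ) (x : α) : Prop :=
  ∀ L : ℕ, T < L → (1 - γ) * (L : ℝ) < ({ℓ : ℕ | ℓ ≤ L ∧ f^[ℓ] x ∈ B}.ncard : ℝ)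

theorem monotone_setOf_isRecurrentTo (f : α → α) (B : Set α) (γ : ℝ) :
    Monotone fun T => {x | IsRecurrentTo f B γ T x} :=
  fun _ _ hT _ hx L hL => hx L (hT.trans_lt hL)

theorem ncard_setOf_le_iterate_mem (f : α → α) (B : Set α) (L : ℕ) (x : α) :
    ({ℓ : ℕ | ℓ ≤ L ∧ f^[ℓ] x ∈ B}.ncard : ℝ) = birkhoffSum f (B.indicator 1) (L + 1) x := by
  classical
  have hset : {ℓ : ℕ | ℓ ≤ L ∧ f^[ℓ] x ∈ B} = ↑({ℓ ∈ Finset.range (L + 1) | f^[ℓ] x ∈ B}) := by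
    ext ℓ
    simp
  rw [hset, ncard_coe_finset, birkhoffSum, Finset.card_filter, Nat.cast_sum]
  simp [indicator_apply]

variable [MeasurableSpace α] {μ : Measure α}

theorem measurableSet_isRecurrentTo (hf : Measurable f) (hB : MeasurableSet B) (γ : ℝ) (T : ℕ) :
    MeasurableSet {x | IsRecurrentTo f B γ T x} := by
  simp only [IsRecurrentTo, ncard_setOf_le_iterate_mem, ofPred_forall]
  exact .iInter fun L => .iInter fun _ => measurableSet_lt measurable_const
    (measurable_birkhoffSum hf (measurable_const.indicator hB) _)

theorem Ergodic.ae_exists_isRecurrentTo [IsProbabilityMeasure μ] (hf : Ergodic f μ)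
    (hB : MeasurableSet B) (hμB : 1 - γ < μ.real B) :
    ∀ᵐ x ∂μ, ∃ T, IsRecurrentTo f B γ T x := by
  obtain ⟨c, hγc, hcB⟩ := exists_between hμB
  set g : α → ℝ := fun y => c - B.indicator 1 y
  have hind : Integrable (B.indicator (1 : α → ℝ)) μ := (integrable_const 1).indicator hB
  have hsum (n : ℕ) (x : α) :
      birkhoffSum f g n x = n * c - birkhoffSum f (B.indicator 1) n x := by
    simp [g, birkhoffSum, Finset.sum_sub_distrib]
  have hint : ∫ x, g x ∂μ < 0 := by
    rw [integral_sub (integrable_const c) hind, integral_indicator_one hB]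
    simp only [integral_const, probReal_univ, smul_eq_mul, one_mul]
    linarith
  filter_upwards [hf.ae_bddAbove_birkhoffSum (g := g) (measurable_const.sub
    (measurable_const.indicator hB)) ((integrable_const c).sub hind) hint] with x ⟨K, hK⟩
  obtain ⟨T, hT⟩ := exists_nat_gt ((K - c) / (c - (1 - γ)))
  refine ⟨T, fun L hL => ?_⟩
  have hKL : c * (L + 1) - K ≤ birkhoffSum f (B.indicator 1) (L + 1) x := by
    have := hK ⟨L + 1, rfl⟩
    push_cast [hsum] at this
    linarith
  have hcγ : 0 < c - (1 - γ) := by linarith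
  have hTL : (K - c) / (c - (1 - γ)) < L := hT.trans (by exact_mod_cast hL)
  rw [div_lt_iff₀ hcγ] at hTL
  rw [ncard_setOf_le_iterate_mem]
  nlinarith

end Recurrence

theorem tendsto_measure_inter_of_ae_exists_mem {α : Type*} [MeasurableSpace α] {μ : Measure α}
    {s : ℕ → Set α} (hs : Monotone s) (hae : ∀ᵐ x ∂μ, ∃ n, x ∈ s n) (t : Set α) :
    Tendsto (fun n => μ (t ∩ s n)) atTop (𝓝 (μ t)) := by
  have hae' : ∀ᵐ x ∂μ, x ∈ ⋃ n, s n := by simpa only [mem_iUnion] using hae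
  have hconull : μ (⋃ n, s n)ᶜ = 0 := mem_ae_iff.mp hae'
  have h := tendsto_measure_iUnion_atTop (μ := μ) fun _ _ hmn => inter_subset_inter_right t (hs hmn)
  rwa [← inter_iUnion, measure_inter_conull hconull] at h

theorem stmt8_general {X : Type*} [MeasurableSpace X] (μ : Measure X) [IsProbabilityMeasure μ]
    (f : X → X) (hf : Ergodic f μ)
    (γ : ℝ)
    (B : Set X) (hBmeas : MeasurableSet B) (hμB : ENNReal.ofReal (1 - γ) < μ B) :
    ∃ (T : ℕ) (B0 : Set X), MeasurableSet B0 ∧ B0 ⊆ B ∧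
      ENNReal.ofReal (1 - γ) < μ B0 ∧
      ∀ x ∈ B0, ∀ L : ℕ, T < L →
        (1 - γ) * (L : ℝ) < (({ℓ : ℕ | ℓ ≤ L ∧ f^[ℓ] x ∈ B}).ncard : ℝ) := by
  have hμB' : 1 - γ < μ.real B := by
    have := ENNReal.toReal_strict_mono (measure_ne_top μ B) hμB
    rw [ENNReal.toReal_ofReal'] at this
    exact (le_max_left _ _).trans_lt this
  have hlim := tendsto_measure_inter_of_ae_exists_mem (monotone_setOf_isRecurrentTo f B γ)
    (hf.ae_exists_isRecurrentTo hBmeas hμB') B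
  obtain ⟨T, hT⟩ := (hlim.eventually (eventually_gt_nhds hμB)).exists
  exact ⟨T, B ∩ {x | IsRecurrentTo f B γ T x},
    hBmeas.inter (measurableSet_isRecurrentTo hf.measurable hBmeas γ T), inter_subset_left, hT,
    fun x hx => hx.2⟩

/-- Elementary quantitative recurrence estimate: for an ergodic measure-preserving map
`f` of a probability space and a measurable set `B` with `μ(B) > 1 − γ`, there exist
`T ∈ ℕ` and a measurable `B° ⊆ B` of measure `> 1 − γ` whose points are
`(γ, T)`-recurrent to `B`. -/
theorem stmt8 {X : Type*} [MeasurableSpace X] (μ : Measure X) [IsProbabilityMeasure μ]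
    (f : X → X) (hf : Ergodic f μ)
    (γ : ℝ) (hγ : γ ∈ Set.Ioo (0:ℝ) 1)
    (B : Set X) (hBmeas : MeasurableSet B) (hμB : ENNReal.ofReal (1 - γ) < μ B) :
    ∃ (T : ℕ) (B0 : Set X), MeasurableSet B0 ∧ B0 ⊆ B ∧
      ENNReal.ofReal (1 - γ) < μ B0 ∧
      ∀ x ∈ B0, ∀ L : ℕ, T < L →
        (1 - γ) * (L : ℝ) < (({ℓ : ℕ | ℓ ≤ L ∧ f^[ℓ] x ∈ B}).ncard : ℝ) :=
  stmt8_general μ f hf γ B hBmeas hμB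
end

section
/- Let Θ ≥ 1 and A ≥ 1 be real numbers, and let t : ℕ → ℕ satisfy t(0) ≤ A and, for all ℓ, m ∈ ℕ, Θ⁻¹·m − A < (t(ℓ+m) : ℤ) − t(ℓ) < Θ·m + A. Let L ∈ ℕ, δ > 0, and let F ⊆ ℕ be a set such that #{ k ∈ ℕ : k ≤ Θ·L + 2A and k ∉ F } ≤ δ·(Θ·L + 2A). Then #{ ℓ ∈ ℕ : ℓ ≤ L and t(ℓ) ∉ F } ≤ (Θ·A + 1)·δ·(Θ·L + 2A). -/
/-- Transfer of density through a quasi-isometric stopping time: if `t : ℕ → ℕ` is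
`(Θ, A)`-quasi-isometric with `t 0 ≤ A`, and the complement of `F` has density at most
`δ` in `[0, ΘL + 2A]`, then `{ℓ ≤ L : t ℓ ∉ F}` has at most `(ΘA + 1)·δ·(ΘL + 2A)`
elements. -/
theorem stmt9 (Θ A : ℝ) (hΘ : 1 ≤ Θ) (hA : 1 ≤ A)
    (t : ℕ → ℕ) (ht0 : (t 0 : ℝ) ≤ A)
    (hqi : ∀ ℓ m : ℕ, Θ⁻¹ * m - A < (t (ℓ + m) : ℝ) - t ℓ ∧
      (t (ℓ + m) : ℝ) - t ℓ < Θ * m + A)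
    (L : ℕ) (δ : ℝ) (hδ : 0 < δ) (F : Set ℕ)
    (hF : (({k : ℕ | (k : ℝ) ≤ Θ * L + 2 * A ∧ k ∉ F}).ncard : ℝ) ≤
      δ * (Θ * L + 2 * A)) :
    (({ℓ : ℕ | ℓ ≤ L ∧ t ℓ ∉ F}).ncard : ℝ) ≤ (Θ * A + 1) * δ * (Θ * L + 2 * A) := by
  classical
  have hΘ0 : (0:ℝ) < Θ := lt_of_lt_of_le one_pos hΘ
  set K : Set ℕ := {k : ℕ | (k : ℝ) ≤ Θ * L + 2 * A ∧ k ∉ F} with hK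
  have hKfin : K.Finite := by
    apply (Set.finite_Iic (⌊Θ * L + 2 * A⌋₊)).subset
    intro k hk
    exact Nat.le_floor hk.1
  set n : ℕ := ⌊Θ * A⌋₊ + 1 with hn
  have hn_le : (n : ℝ) ≤ Θ * A + 1 := by
    have := Nat.floor_le (by positivity : (0:ℝ) ≤ Θ * A)
    push_cast [hn]
    linarith
  set B : Finset ℕ := (Finset.Icc 0 L).filter (fun ℓ => t ℓ ∉ F) with hB
  have hBset : {ℓ : ℕ | ℓ ≤ L ∧ t ℓ ∉ F} = ↑B := by
    ext ℓ; simp [hB]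
  -- the image lands in K
  have hmaps : ∀ ℓ ∈ B, t ℓ ∈ K := by
    intro ℓ hℓ
    simp only [hB, Finset.mem_filter, Finset.mem_Icc] at hℓ
    refine ⟨?_, hℓ.2⟩
    have h1 := (hqi 0 ℓ).2
    simp only [Nat.zero_add] at h1
    have h2 : (ℓ : ℝ) ≤ L := by exact_mod_cast hℓ.1.2
    have h3 : Θ * ℓ ≤ Θ * L := by nlinarith
    have h4 : (0:ℝ) ≤ t 0 := Nat.cast_nonneg _
    linarith
  -- fiber bound
  have hfiber : ∀ a ∈ B.image t, (B.filter (fun ℓ => t ℓ = a)).card ≤ n := by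
    intro a _
    set s := B.filter (fun ℓ => t ℓ = a) with hs
    by_cases hne : s.Nonempty
    · obtain ⟨ℓ₀, hℓ₀⟩ := s.exists_min_image id hne
      have hsub : s ⊆ Finset.Icc ℓ₀ (ℓ₀ + ⌊Θ * A⌋₊) := by
        intro ℓ hℓ
        have h1 : ℓ₀ ≤ ℓ := hℓ₀.2 ℓ hℓ
        have heq : t ℓ = t ℓ₀ := by
          have e1 : t ℓ = a := by
            have := (Finset.mem_filter.mp (hs ▸ hℓ)).2; simpa using this
          have e2 : t ℓ₀ = a := by
            have := (Finset.mem_filter.mp (hs ▸ hℓ₀.1)).2; simpa using this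
          rw [e1, e2]
        have hq := (hqi ℓ₀ (ℓ - ℓ₀)).1
        rw [Nat.add_sub_cancel' h1, heq] at hq
        have hlt : ((ℓ - ℓ₀ : ℕ) : ℝ) < Θ * A := by
          have hinv : Θ⁻¹ * Θ = 1 := inv_mul_cancel₀ (ne_of_gt hΘ0)
          have hm0 : (0:ℝ) ≤ ((ℓ - ℓ₀ : ℕ) : ℝ) := Nat.cast_nonneg _
          nlinarith [inv_pos.mpr hΘ0]
        have hle : ℓ - ℓ₀ ≤ ⌊Θ * A⌋₊ := Nat.le_floor (le_of_lt hlt)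
        simp only [Finset.mem_Icc]
        omega
      calc s.card ≤ (Finset.Icc ℓ₀ (ℓ₀ + ⌊Θ * A⌋₊)).card := Finset.card_le_card hsub
        _ = ⌊Θ * A⌋₊ + 1 := by rw [Nat.card_Icc]; omega
        _ = n := hn.symm
    · rw [Finset.not_nonempty_iff_eq_empty] at hne
      simp [hne]
  have hcard : B.card ≤ n * (B.image t).card := Finset.card_le_mul_card_image B n hfiber
  have himg : ((B.image t : Set ℕ)) ⊆ K := by
    intro k hk
    simp only [Finset.coe_image, Set.mem_image, Finset.mem_coe] at hk
    obtain ⟨ℓ, hℓ, rfl⟩ := hk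
    exact hmaps ℓ hℓ
  have himgcard : (B.image t).card ≤ K.ncard := by
    rw [← Set.ncard_coe_finset]
    exact Set.ncard_le_ncard himg hKfin
  have hKcard : (0:ℝ) ≤ (K.ncard : ℝ) := Nat.cast_nonneg _
  have hδb : (0:ℝ) ≤ δ * (Θ * L + 2 * A) := by nlinarith [Nat.cast_nonneg (α := ℝ) L]
  rw [hBset, Set.ncard_coe_finset]
  calc (B.card : ℝ) ≤ (n : ℝ) * (K.ncard : ℝ) := by
        exact_mod_cast le_trans hcard (Nat.mul_le_mul_left n himgcard)
    _ ≤ (Θ * A + 1) * (δ * (Θ * L + 2 * A)) := by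
        apply mul_le_mul hn_le hF hKcard
        nlinarith
    _ = (Θ * A + 1) * δ * (Θ * L + 2 * A) := by ring
end

section
/- Let ν be a nonzero, locally finite Borel measure on ℝ. Let (a_n) and (b_n) be real sequences with a_n ≠ 0 for all n, a_n → a where a ≠ 0, and b_n → b, and suppose that for each n there exists c_n > 0 such that the pushforward of ν under x ↦ a_n·x + b_n equals c_n·ν. Then there exists c > 0 such that the pushforward of ν under x ↦ a·x + b equals c·ν. In other words, the set of invertible affine maps ψ of ℝ with ψ_*ν proportional to ν is closed under convergence of the coefficients. -/
/-!
Test against compactly supported continuous functions `g`. Since `a n → a0 ≠ 0`, the functions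
`g (a n * x + b n)` are eventually supported in one fixed compact set, so dominated convergence
gives `∫ g (a n * x + b n) ∂ν → ∫ g (a0 * x + b0) ∂ν`, while the left side equals
`c n * ∫ g ∂ν`. Choosing `g` with `∫ g ∂ν ≠ 0` shows that `c n` converges to some `κ ≥ 0`, and
then the pushforward and `κ • ν` integrate every such `g` alike, so they agree by the uniqueness
part of the Riesz–Markov–Kakutani theorem. Finally `κ ≠ 0` because `ν ≠ 0`.
-/

open MeasureTheory Filter Metric Set Topology
open scoped NNReal CompactlySupported

theorem eventually_preimage_affine_subset_closedBall {ι : Type*} {l : Filter ι} {a b : ι → ℝ}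
    {a0 b0 : ℝ} (ha0 : a0 ≠ 0) (ha : Tendsto a l (𝓝 a0)) (hb : Tendsto b l (𝓝 b0)) (R : ℝ) :
    ∃ M, ∀ᶠ i in l, (fun x => a i * x + b i) ⁻¹' closedBall 0 R ⊆ closedBall 0 M := by
  have ha0' : 0 < |a0| / 2 := half_pos (abs_pos.2 ha0)
  refine ⟨(R + |b0| + 1) / (|a0| / 2), ?_⟩
  filter_upwards [ha.abs.eventually (eventually_ge_nhds (half_lt_self (abs_pos.2 ha0))),
    hb.abs.eventually (eventually_le_nhds (lt_add_one |b0|))] with i hai hbi x hx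
  simp only [mem_preimage, mem_closedBall, dist_zero_right, Real.norm_eq_abs] at hx ⊢
  rw [le_div_iff₀ ha0']
  have : |a i| * |x| ≤ R + |b i| := calc
    |a i| * |x| = |(a i * x + b i) - b i| := by rw [add_sub_cancel_right, abs_mul]
    _ ≤ |a i * x + b i| + |b i| := abs_sub _ _
    _ ≤ R + |b i| := by gcongr
  nlinarith [abs_nonneg x]

theorem tendsto_integral_comp_affine {E : Type*} [NormedAddCommGroup E] [NormedSpace ℝ E]
    {ι : Type*} {l : Filter ι} [l.IsCountablyGenerated] (ν : Measure ℝ)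
    [IsLocallyFiniteMeasure ν] {a b : ι → ℝ} {a0 b0 : ℝ} (ha0 : a0 ≠ 0)
    (ha : Tendsto a l (𝓝 a0)) (hb : Tendsto b l (𝓝 b0)) {g : ℝ → E} (hg : Continuous g)
    (hgc : HasCompactSupport g) :
    Tendsto (fun i => ∫ x, g (a i * x + b i) ∂ν) l (𝓝 (∫ x, g (a0 * x + b0) ∂ν)) := by
  obtain ⟨R, hR⟩ := hgc.isCompact.isBounded.subset_closedBall 0
  obtain ⟨C, hC⟩ := hg.bounded_above_of_compact_support hgc
  obtain ⟨M, hM⟩ := eventually_preimage_affine_subset_closedBall ha0 ha hb R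
  refine tendsto_integral_filter_of_dominated_convergence ((closedBall 0 M).indicator fun _ => C)
    (Eventually.of_forall fun i => (hg.comp (by fun_prop)).aestronglyMeasurable) ?_
    ((integrableOn_const (isCompact_closedBall 0 M).measure_lt_top.ne).integrable_indicator
      measurableSet_closedBall)
    (ae_of_all _ fun x => (hg.tendsto _).comp ((ha.mul_const x).add hb))
  filter_upwards [hM] with i hi
  refine ae_of_all _ fun x => ?_
  by_cases hx : x ∈ closedBall 0 M
  · rw [indicator_of_mem hx]
    exact hC _
  · rw [indicator_of_notMem hx, image_eq_zero_of_notMem_tsupport fun h => hx (hi (hR h)),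
      norm_zero]

theorem integral_comp_eq_smul_of_map_eq_smul {X E : Type*} [MeasurableSpace X]
    [NormedAddCommGroup E] [NormedSpace ℝ E] {ν : Measure X} {ψ : X → X} (hψ : Measurable ψ)
    {c : ℝ≥0} (h : ν.map ψ = c • ν) {g : X → E} (hg : StronglyMeasurable g) :
    ∫ x, g (ψ x) ∂ν = (c : ℝ) • ∫ x, g x ∂ν := by
  rw [← integral_map hψ.aemeasurable hg.aestronglyMeasurable, h, integral_smul_nnreal_measure,
    NNReal.smul_def]

theorem exists_integral_ne_zero_of_ne_zero {X : Type*} [TopologicalSpace X] [T2Space X]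
    [LocallyCompactSpace X] [MeasurableSpace X] [BorelSpace X] {ν : Measure X} [ν.Regular]
    (hν : ν ≠ 0) : ∃ f : C_c(X, ℝ), ∫ x, f x ∂ν ≠ 0 := by
  by_contra! h
  exact hν (Measure.ext_of_integral_eq_on_compactlySupported fun f => by simp [h f])

theorem stmt10_general (ν : Measure ℝ) [IsLocallyFiniteMeasure ν] (hν : ν ≠ 0)
    (a b : ℕ → ℝ) (a0 b0 : ℝ)
    (ha0 : a0 ≠ 0)
    (haconv : Tendsto a atTop (nhds a0)) (hbconv : Tendsto b atTop (nhds b0))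
    (hinv : ∀ n, ∃ c : ℝ≥0, 0 < c ∧ Measure.map (fun x => a n * x + b n) ν = c • ν) :
    ∃ c : ℝ≥0, 0 < c ∧ Measure.map (fun x => a0 * x + b0) ν = c • ν := by
  choose c _ hc using hinv
  have hcomp (n : ℕ) (g : C_c(ℝ, ℝ)) : ∫ x, g (a n * x + b n) ∂ν = c n * ∫ x, g x ∂ν :=
    integral_comp_eq_smul_of_map_eq_smul (by fun_prop) (hc n)
      (map_continuous g).stronglyMeasurable
  have hlim (g : C_c(ℝ, ℝ)) :=
    tendsto_integral_comp_affine ν ha0 haconv hbconv (map_continuous g) g.hasCompactSupport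
  obtain ⟨f, hf⟩ := exists_integral_ne_zero_of_ne_zero hν
  set κ := (∫ x, f (a0 * x + b0) ∂ν) / ∫ x, f x ∂ν
  have hcκ : Tendsto (fun n => (c n : ℝ)) atTop (𝓝 κ) :=
    ((hlim f).div_const _).congr fun n => by rw [hcomp, mul_div_cancel_right₀ _ hf]
  have hκ (g : C_c(ℝ, ℝ)) : ∫ x, g (a0 * x + b0) ∂ν = κ * ∫ x, g x ∂ν :=
    tendsto_nhds_unique (hlim g) ((hcκ.mul_const _).congr fun n => (hcomp n g).symm)
  have hκ0 : 0 ≤ κ := ge_of_tendsto' hcκ fun n => (c n).coe_nonneg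
  let ψ : ℝ ≃ₜ ℝ := (Homeomorph.mulLeft₀ a0 ha0).trans (Homeomorph.addRight b0)
  have : (ν.map fun x => a0 * x + b0).Regular := Measure.Regular.map ψ
  have hmap : ν.map (fun x => a0 * x + b0) = κ.toNNReal • ν :=
    Measure.ext_of_integral_eq_on_compactlySupported fun g => by
      rw [integral_map (by fun_prop) (map_continuous g).aestronglyMeasurable,
        integral_smul_nnreal_measure, NNReal.smul_def, Real.coe_toNNReal _ hκ0, smul_eq_mul]
      exact hκ g
  refine ⟨κ.toNNReal, pos_iff_ne_zero.2 fun hκ' => hν ?_, hmap⟩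
  rw [hκ', zero_smul, Measure.map_eq_zero_iff (by fun_prop)] at hmap
  exact hmap

/-- The set of invertible affine maps of `ℝ` preserving a nonzero locally finite
measure `ν` up to a positive scalar is closed under convergence of coefficients. -/
theorem stmt10 (ν : Measure ℝ) [IsLocallyFiniteMeasure ν] (hν : ν ≠ 0)
    (a b : ℕ → ℝ) (a0 b0 : ℝ)
    (ha : ∀ n, a n ≠ 0) (ha0 : a0 ≠ 0)
    (haconv : Tendsto a atTop (nhds a0)) (hbconv : Tendsto b atTop (nhds b0))
    (hinv : ∀ n, ∃ c : ℝ≥0, 0 < c ∧ Measure.map (fun x => a n * x + b n) ν = c • ν) :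
    ∃ c : ℝ≥0, 0 < c ∧ Measure.map (fun x => a0 * x + b0) ν = c • ν :=
  stmt10_general ν hν a b a0 b0 ha0 haconv hbconv hinv
end

section
/- Let X be a compact metric space, μ a Borel probability measure on X, and (ν_x)_{x ∈ X} a family of locally finite Borel measures on ℝ such that for every continuous compactly supported function φ : ℝ → ℝ the map x ↦ ∫ φ dν_x is Borel measurable. Then for every δ > 0 there exists a compact set A ⊆ X with μ(A) > 1 − δ such that for every sequence (x_n) in A converging to a point x ∈ A and every continuous compactly supported φ : ℝ → ℝ, one has ∫ φ dν_{x_n} → ∫ φ dν_x. -/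
/-!
Vague convergence on a finite-dimensional space is already tested by countably many functions:
the plateau bumps `χₘ` and the products `g χₘ`, with `g` running over a countable dense subset
of `C(E, ℝ)` for the compact-open topology. Indeed, if `φ` is supported where `χₘ = 1` and `g` is
`η`-close to `φ` on the support of `χₘ`, then `|φ - g χₘ| ≤ η χₘ`, and the masses `∫ χₘ dνₙ`
stay bounded. Lusin's theorem, applied to the single measurable map `x ↦ (∫ f dνₓ)_{f ∈ S}` into
the second countable space `S → ℝ`, then gives the compact set.
-/

open MeasureTheory Filter Set Topology
open scoped ENNReal

universe u

section Lusin

variable {X Y : Type*} [TopologicalSpace X] [MeasurableSpace X] [OpensMeasurableSpace X]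
  {μ : Measure X} [IsFiniteMeasure μ] [μ.WeaklyRegular]

theorem MeasurableSet.exists_isClosed_isOpen_measure_diff_lt {A : Set X} (hA : MeasurableSet A)
    {ε : ℝ≥0∞} (hε : ε ≠ 0) :
    ∃ F U, IsClosed F ∧ IsOpen U ∧ F ⊆ A ∧ A ⊆ U ∧ μ (U \ F) < ε := by
  obtain ⟨F, hFA, hF, hAF⟩ :=
    hA.exists_isClosed_sdiff_lt (measure_ne_top μ A) (ENNReal.half_pos hε).ne'
  obtain ⟨U, hAU, hU, -, hUA⟩ :=
    hA.exists_isOpen_sdiff_lt (measure_ne_top μ A) (ENNReal.half_pos hε).ne'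
  refine ⟨F, U, hF, hU, hFA, hAU, ?_⟩
  calc μ (U \ F) ≤ μ (U \ A ∪ A \ F) := measure_mono (sdiff_triangle U A F)
    _ ≤ μ (U \ A) + μ (A \ F) := measure_union_le _ _
    _ < ε / 2 + ε / 2 := ENNReal.add_lt_add hUA hAF
    _ = ε := ENNReal.add_halves ε

theorem Measurable.exists_isClosed_measure_compl_lt_continuousOn [TopologicalSpace Y]
    [SecondCountableTopology Y] [MeasurableSpace Y] [OpensMeasurableSpace Y] {f : X → Y}
    (hf : Measurable f) {ε : ℝ≥0∞} (hε : ε ≠ 0) :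
    ∃ K, IsClosed K ∧ μ Kᶜ < ε ∧ ContinuousOn f K := by
  obtain ⟨B, hBc, -, hB⟩ := TopologicalSpace.exists_countable_basis Y
  have := hBc.to_subtype
  obtain ⟨δ, hδ, hδε⟩ := ENNReal.exists_pos_sum_of_countable' hε B
  choose F U hF hU hFf hfU hUF using fun t : B =>
    (hf (hB.isOpen t.2).measurableSet).exists_isClosed_isOpen_measure_diff_lt (μ := μ) (hδ t).ne'
  -- On `⋂ t, F t ∪ (U t)ᶜ` the preimage of each basic open set `t` coincides with `U t`.
  refine ⟨⋂ t, F t ∪ (U t)ᶜ, isClosed_iInter fun t => (hF t).union (hU t).isClosed_compl, ?_, ?_⟩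
  · calc μ (⋂ t, F t ∪ (U t)ᶜ)ᶜ = μ (⋃ t, U t \ F t) := by
          simp only [compl_iInter, compl_union, compl_compl, sdiff_eq, inter_comm]
      _ ≤ ∑' t, μ (U t \ F t) := measure_iUnion_le _
      _ ≤ ∑' t, δ t := ENNReal.tsum_le_tsum fun t => (hUF t).le
      _ < ε := hδε
  · refine hB.continuousOn_iff.2 fun t ht => ⟨U ⟨t, ht⟩, hU _, ?_⟩
    refine Set.ext fun x => and_congr_left fun hx => ⟨fun h => hfU _ h, fun h => ?_⟩
    exact hFf _ (((mem_iInter.1 hx) ⟨t, ht⟩).resolve_right (not_not_intro h))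

end Lusin

theorem abs_integral_sub_le_mul_integral {α : Type*} [MeasurableSpace α] {ν : Measure α}
    {φ g χ : α → ℝ} (hφ : Integrable φ ν) (hg : Integrable g ν) (hχ : Integrable χ ν) {η : ℝ}
    (h : ∀ y, |φ y - g y| ≤ η * χ y) :
    |∫ y, φ y ∂ν - ∫ y, g y ∂ν| ≤ η * ∫ y, χ y ∂ν := by
  rw [← integral_sub hφ hg, ← integral_const_mul]
  simpa only [Real.norm_eq_abs] using
    norm_integral_le_of_norm_le (f := fun y => φ y - g y) (hχ.const_mul η) (Eventually.of_forall h)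

theorem tendsto_of_forall_abs_sub_le_mul {ι : Type*} {l : Filter ι} {u w : ι → ℝ} {a c : ℝ}
    (hw : Tendsto w l (𝓝 c))
    (h : ∀ η > 0, ∃ v : ι → ℝ, ∃ b, Tendsto v l (𝓝 b) ∧ (∀ i, |u i - v i| ≤ η * w i) ∧
      |a - b| ≤ η * c) :
    Tendsto u l (𝓝 a) := by
  refine Metric.tendsto_nhds.2 fun ε hε => ?_
  set η := ε / (4 * (|c| + 1))
  have hη : 0 < η := by positivity
  have hηc : η * (|c| + 1) = ε / 4 := by simp only [η]; field_simp
  obtain ⟨v, b, hv, huv, hab⟩ := h η hη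
  filter_upwards [hw.eventually (gt_mem_nhds (lt_of_le_of_lt (le_abs_self c) (lt_add_one |c|))),
    Metric.tendsto_nhds.1 hv (ε / 4) (by positivity)] with i hwi hvi
  rw [Real.dist_eq] at hvi ⊢
  have hc : η * c ≤ η * (|c| + 1) := by gcongr; linarith [le_abs_self c]
  have hw' : η * w i ≤ η * (|c| + 1) := by gcongr
  calc |u i - a| ≤ |u i - v i| + |v i - b| + |b - a| := by
        linarith [abs_sub_le (u i) (v i) a, abs_sub_le (v i) b a]
    _ < ε := by linarith [huv i, abs_sub_comm a b]

section Vague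

variable {E : Type*} [NormedAddCommGroup E] [NormedSpace ℝ E] [FiniteDimensional ℝ E]

variable (E) in
noncomputable def natBump (m : ℕ) : ContDiffBump (0 : E) :=
  ⟨m + 1, m + 2, by positivity, by linarith⟩

theorem Dense.exists_abs_sub_mul_bump_le {D : Set C(E, ℝ)} (hD : Dense D) {φ : E → ℝ}
    (hφ : Continuous φ) {m : ℕ} (hm : tsupport φ ⊆ Metric.closedBall 0 (m + 1)) {η : ℝ}
    (hη : 0 < η) :
    ∃ g ∈ D, ∀ y, |φ y - g y * natBump E m y| ≤ η * natBump E m y := by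
  set b : ContDiffBump (0 : E) := natBump E m
  have hφb : ∀ y, φ y = φ y * b y := fun y => by
    by_cases hy : y ∈ tsupport φ
    · rw [b.one_of_mem_closedBall (hm hy), mul_one]
    · rw [image_eq_zero_of_notMem_tsupport hy, zero_mul]
  obtain ⟨g, hgD, hg⟩ := hD.inter_nhds_nonempty
    ((nhds_basis_uniformity (x := (⟨φ, hφ⟩ : C(E, ℝ)))
      Metric.uniformity_basis_dist.compactConvergenceUniformity).mem_of_mem
      (i := (tsupport b, η)) ⟨b.hasCompactSupport, hη⟩)
  refine ⟨g, hgD, fun y => ?_⟩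
  rw [hφb y, ← sub_mul, abs_mul, abs_of_nonneg b.nonneg]
  by_cases hy : y ∈ tsupport b
  · exact mul_le_mul_of_nonneg_right (abs_sub_comm (g y) (φ y) ▸ (hg y hy).le) b.nonneg
  · rw [image_eq_zero_of_notMem_tsupport hy, mul_zero, mul_zero]

variable [MeasurableSpace E] [BorelSpace E]

theorem exists_countable_forall_tendsto_integral :
    ∃ S : Set (E → ℝ), S.Countable ∧ (∀ f ∈ S, Continuous f ∧ HasCompactSupport f) ∧
      ∀ {ι : Type u} (l : Filter ι) (ν : ι → Measure E) (ν₀ : Measure E),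
        (∀ i, IsLocallyFiniteMeasure (ν i)) → IsLocallyFiniteMeasure ν₀ →
        (∀ f ∈ S, Tendsto (fun i => ∫ y, f y ∂(ν i)) l (𝓝 (∫ y, f y ∂ν₀))) →
        ∀ φ : E → ℝ, Continuous φ → HasCompactSupport φ →
          Tendsto (fun i => ∫ y, φ y ∂(ν i)) l (𝓝 (∫ y, φ y ∂ν₀)) := by
  obtain ⟨D, hDc, hD⟩ := TopologicalSpace.exists_countable_dense C(E, ℝ)
  let bumpMul (m : ℕ) (g : C(E, ℝ)) : E → ℝ := fun y => g y * natBump E m y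
  refine ⟨range (fun m => ⇑(natBump E m)) ∪ ⋃ m, bumpMul m '' D,
    (countable_range _).union (countable_iUnion fun m => hDc.image _), ?_, ?_⟩
  · rintro f (⟨m, rfl⟩ | hf)
    · exact ⟨(natBump E m).continuous, (natBump E m).hasCompactSupport⟩
    · obtain ⟨m, g, -, rfl⟩ := mem_iUnion.1 hf
      exact ⟨g.continuous.mul (natBump E m).continuous, (natBump E m).hasCompactSupport.mul_left⟩
  intro ι l ν ν₀ hν hν₀ hS φ hφ hφs
  obtain ⟨m, hm⟩ : ∃ m : ℕ, tsupport φ ⊆ Metric.closedBall 0 (m + 1) := by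
    obtain ⟨r, hr⟩ := hφs.isBounded.subset_closedBall 0
    exact ⟨⌈r⌉₊, hr.trans (Metric.closedBall_subset_closedBall (by linarith [Nat.le_ceil r]))⟩
  refine tendsto_of_forall_abs_sub_le_mul (hS _ (Or.inl ⟨m, rfl⟩)) fun η hη => ?_
  obtain ⟨g, hgD, hg⟩ := hD.exists_abs_sub_mul_bump_le hφ hm hη
  have hgc : Continuous (bumpMul m g) := g.continuous.mul (natBump E m).continuous
  have hgs : HasCompactSupport (bumpMul m g) := (natBump E m).hasCompactSupport.mul_left
  have hcompare : ∀ μ : Measure E, IsLocallyFiniteMeasure μ →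
      |∫ y, φ y ∂μ - ∫ y, bumpMul m g y ∂μ| ≤ η * ∫ y, natBump E m y ∂μ := fun μ _ =>
    abs_integral_sub_le_mul_integral (hφ.integrable_of_hasCompactSupport hφs)
      (hgc.integrable_of_hasCompactSupport hgs)
      ((natBump E m).continuous.integrable_of_hasCompactSupport (natBump E m).hasCompactSupport) hg
  exact ⟨_, _, hS _ (Or.inr (mem_iUnion.2 ⟨m, g, hgD, rfl⟩)), fun i => hcompare _ (hν i),
    hcompare _ hν₀⟩

end Vague

/-- Lusin-type lemma for measurable families of locally finite measures on `ℝ`: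
for every `δ > 0`, there is a compact set `A` of measure `> 1 − δ` on which the
family is vaguely continuous along sequences. -/
theorem stmt12 {X : Type*} [MetricSpace X] [CompactSpace X]
    [MeasurableSpace X] [BorelSpace X]
    (μ : Measure X) [IsProbabilityMeasure μ]
    (ν : X → Measure ℝ) (hfin : ∀ x, IsLocallyFiniteMeasure (ν x))
    (hmeas : ∀ φ : ℝ → ℝ, Continuous φ → HasCompactSupport φ →
      Measurable fun x => ∫ y, φ y ∂(ν x))
    (δ : ℝ) (hδ : 0 < δ) :
    ∃ A : Set X, IsCompact A ∧ ENNReal.ofReal (1 - δ) < μ A ∧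
      ∀ (xs : ℕ → X) (x : X), (∀ n, xs n ∈ A) → x ∈ A →
        Tendsto xs atTop (nhds x) →
        ∀ φ : ℝ → ℝ, Continuous φ → HasCompactSupport φ →
          Tendsto (fun n => ∫ y, φ y ∂(ν (xs n))) atTop (nhds (∫ y, φ y ∂(ν x))) := by
  obtain ⟨S, hSc, hS, hS_tendsto⟩ := exists_countable_forall_tendsto_integral (E := ℝ)
  have := hSc.to_subtype
  have hF : Measurable fun x (f : S) => ∫ y, (f : ℝ → ℝ) y ∂(ν x) :=
    measurable_pi_lambda _ fun f => hmeas f (hS f f.2).1 (hS f f.2).2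
  have hδ' : ENNReal.ofReal (1 - δ) < 1 := ENNReal.ofReal_lt_one.2 (by linarith)
  obtain ⟨K, hK, hKμ, hKcont⟩ :=
    hF.exists_isClosed_measure_compl_lt_continuousOn (μ := μ) (tsub_pos_of_lt hδ').ne'
  refine ⟨K, hK.isCompact, ?_, fun xs x hxs hx hxsx φ hφ hφs => ?_⟩
  · rw [← compl_compl K, prob_compl_eq_one_sub hK.measurableSet.compl]
    exact lt_tsub_comm.1 hKμ
  have hxsK : Tendsto xs atTop (𝓝[K] x) := tendsto_nhdsWithin_iff.2 ⟨hxsx, .of_forall hxs⟩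
  refine hS_tendsto atTop (ν ∘ xs) (ν x) (fun n => hfin _) (hfin x) (fun f hf => ?_) φ hφ hφs
  exact ((continuous_apply (⟨f, hf⟩ : S)).tendsto _).comp ((hKcont x hx).tendsto.comp hxsK)
end

section
/- Let λ₁, λ₂, λ₃ : ℝ → ℝ be functions, each differentiable at 0, and suppose there is an open interval I containing 0 such that for every ε ∈ I: λ₁(ε)·λ₂(ε)·λ₃(ε) = 1, λ₁(ε) + λ₂(ε) + λ₃(ε) = 5 + ε, and λ₁(ε)·λ₂(ε) + λ₁(ε)·λ₃(ε) + λ₂(ε)·λ₃(ε) = 6 + 2ε. If 1 < λ₂(0) < 2, then λ₂′(0) ≠ 0. -/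
/-!
Each `λᵢ(ε)` is a root of the characteristic polynomial `p(X) + ε q(X)`, where
`p = X³ - 5X² + 6X - 1` and `q = X(2 - X)`. Differentiating `p(λ₂(ε)) + ε q(λ₂(ε)) = 0`
at `ε = 0` gives `p'(λ₂(0)) λ₂'(0) + q(λ₂(0)) = 0`, so `λ₂'(0) = 0` would force
`λ₂(0) ∈ {0, 2}`.
-/

open Polynomial Filter Topology

theorem cubic_eval_eq_zero_of_vieta {R : Type*} [CommRing R] {a b c s t : R}
    (hprod : a * b * c = 1) (hsum : a + b + c = s) (hsym : a * b + a * c + b * c = t) :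
    b ^ 3 - s * b ^ 2 + t * b - 1 = 0 := by
  rw [← hprod, ← hsum, ← hsym]
  ring

theorem hasDerivAt_eval_add_mul_eval (p q : ℝ[X]) {l : ℝ → ℝ} {d x : ℝ}
    (hl : HasDerivAt l d x) :
    HasDerivAt (fun ε => p.eval (l ε) + ε * q.eval (l ε))
      ((p.derivative.eval (l x) + x * q.derivative.eval (l x)) * d + q.eval (l x)) x := by
  have hp := (p.hasDerivAt (l x)).comp x hl
  have hq := (q.hasDerivAt (l x)).comp x hl
  refine (hp.add ((hasDerivAt_id' x).mul hq)).congr_deriv ?_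
  simp only [Function.comp_apply]
  ring

theorem eval_eq_zero_of_eval_add_mul_eval_eventually_eq_zero (p q : ℝ[X]) {l : ℝ → ℝ} {x : ℝ}
    (hl : DifferentiableAt ℝ l x)
    (hroot : ∀ᶠ ε in 𝓝 x, p.eval (l ε) + ε * q.eval (l ε) = 0)
    (hcrit : deriv l x = 0) :
    q.eval (l x) = 0 := by
  have hderiv := hasDerivAt_eval_add_mul_eval p q hl.hasDerivAt
  rw [hcrit, mul_zero, zero_add] at hderiv
  exact hderiv.unique ((hasDerivAt_const x 0).congr_of_eventuallyEq hroot)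

theorem stmt15_general (l1 l2 l3 : ℝ → ℝ)
    (h2 : DifferentiableAt ℝ l2 0)
    (δ : ℝ) (hδ : 0 < δ)
    (hprod : ∀ ε ∈ Set.Ioo (-δ) δ, l1 ε * l2 ε * l3 ε = 1)
    (hsum : ∀ ε ∈ Set.Ioo (-δ) δ, l1 ε + l2 ε + l3 ε = 5 + ε)
    (hsym : ∀ ε ∈ Set.Ioo (-δ) δ,
      l1 ε * l2 ε + l1 ε * l3 ε + l2 ε * l3 ε = 6 + 2 * ε)
    (hl2 : l2 0 ∈ Set.Ioo (1:ℝ) 2) :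
    deriv l2 0 ≠ 0 := by
  set p : ℝ[X] := X ^ 3 - 5 * X ^ 2 + 6 * X - 1
  set q : ℝ[X] := X * (2 - X)
  have hroot : ∀ᶠ ε in 𝓝 0, p.eval (l2 ε) + ε * q.eval (l2 ε) = 0 := by
    filter_upwards [Ioo_mem_nhds (neg_neg_iff_pos.mpr hδ) hδ] with ε hε
    have hcubic := cubic_eval_eq_zero_of_vieta (hprod ε hε) (hsum ε hε) (hsym ε hε)
    simp only [p, q, eval_sub, eval_add, eval_pow, eval_X, eval_mul, eval_ofNat, eval_one]
    linear_combination hcubic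
  intro hcrit
  have hq := eval_eq_zero_of_eval_add_mul_eval_eventually_eq_zero p q h2 hroot hcrit
  simp only [q, eval_mul, eval_sub, eval_X, eval_ofNat] at hq
  obtain ⟨hlo, hhi⟩ := hl2
  nlinarith

/-- Gogolev–Kolmogorov–Maimon conservative family: if three functions, differentiable
at `0`, satisfy the elementary symmetric relations `λ₁λ₂λ₃ = 1`,
`λ₁ + λ₂ + λ₃ = 5 + ε`, `λ₁λ₂ + λ₁λ₃ + λ₂λ₃ = 6 + 2ε` on an open interval around `0`,
and `1 < λ₂(0) < 2`, then `λ₂′(0) ≠ 0`. -/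
theorem stmt15 (l1 l2 l3 : ℝ → ℝ)
    (h1 : DifferentiableAt ℝ l1 0) (h2 : DifferentiableAt ℝ l2 0)
    (h3 : DifferentiableAt ℝ l3 0)
    (δ : ℝ) (hδ : 0 < δ)
    (hprod : ∀ ε ∈ Set.Ioo (-δ) δ, l1 ε * l2 ε * l3 ε = 1)
    (hsum : ∀ ε ∈ Set.Ioo (-δ) δ, l1 ε + l2 ε + l3 ε = 5 + ε)
    (hsym : ∀ ε ∈ Set.Ioo (-δ) δ,
      l1 ε * l2 ε + l1 ε * l3 ε + l2 ε * l3 ε = 6 + 2 * ε)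
    (hl2 : l2 0 ∈ Set.Ioo (1:ℝ) 2) :
    deriv l2 0 ≠ 0 :=
  stmt15_general l1 l2 l3 h2 δ hδ hprod hsum hsym hl2
end
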